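/- For positive semidefinite matrices A and B, if M(B⁺, A⁺) and M(A,B) commute, then the support projections Π_A and Π_B commute. Conversely, if Π_A and Π_B commute, then M(B⁺, A⁺) and M(A,B) commute. -/

import Mathlib

open scoped ComplexOrder

open Classical in
/-- The unique positive semidefinite square root of a positive semidefinite matrix
(junk value 0 otherwise). -/
noncomputable def psqrt {n : Type*} [Fintype n] [DecidableEq n] (X : Matrix n n ℂ) :
    Matrix n n ℂ :=
  if h : X.PosSemidef then
    (h.1.eigenvectorUnitary : Matrix n n ℂ) * Matrix.diagonal ((↑) ∘ Real.sqrt ∘ h.1.eigenvalues) *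
      (star h.1.eigenvectorUnitary : Matrix n n ℂ)
  else 0

/-- The range (support) of a matrix, i.e. the orthogonal complement of its kernel. -/
noncomputable def msupp {n : Type*} [Fintype n] [DecidableEq n] (X : Matrix n n ℂ) :
    Submodule ℂ (EuclideanSpace ℂ n) :=
  (LinearMap.ker (Matrix.toEuclideanLin X))ᗮ

/-- The kernel of a matrix, as a subspace of Euclidean space. -/
noncomputable def mker {n : Type*} [Fintype n] [DecidableEq n] (X : Matrix n n ℂ) :
    Submodule ℂ (EuclideanSpace ℂ n) :=
  LinearMap.ker (Matrix.toEuclideanLin X)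

/-- The generalized geometric mean M(A,B) = √A · √(√(A⁺) B √(A⁺)) · √A, where Ap
stands for the Moore–Penrose pseudoinverse A⁺ of A. -/
noncomputable def geoMean {n : Type*} [Fintype n] [DecidableEq n]
    (A Ap B : Matrix n n ℂ) : Matrix n n ℂ :=
  psqrt A * psqrt (psqrt Ap * B * psqrt Ap) * psqrt A

open Matrix in
/-- `Ap` is the Moore–Penrose pseudoinverse of `A` (the four Penrose conditions). -/
def IsMPInv {n : Type*} [Fintype n] [DecidableEq n] (A Ap : Matrix n n ℂ) : Prop :=
  A * Ap * A = A ∧ Ap * A * Ap = Ap ∧ (A * Ap)ᴴ = A * Ap ∧ (Ap * A)ᴴ = Ap * A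

/-!
Write `P = A⁺A`, `Q = B⁺B`, `S = √A`, `V = √A⁺`, `T = √B`, `U = √B⁺` and `X = VT`, so that
`M(A,B) = S √(XXᴴ) S` and `M(B⁺,A⁺) = U √(XᴴX) U`.

Kernel calculus for positive matrices gives `ker M(A,B) = ker QP` and `ker M(B⁺,A⁺) = ker PQ`,
hence `range M(A,B) = range PQ`. If the two means commute, `M(A,B)` maps `ker PQ` into
`ker PQ ∩ range PQ = 0`, so `ker PQ ⊆ ker QP`; then `QP = QPQ` is self-adjoint, i.e. `PQ = QP`.

Conversely, if `PQ = QP` then `XXᴴ (SU) XᴴX = X XᴴX`. Since `√(XXᴴ)` and `√(XᴴX)` are the same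
polynomial, divisible by `x`, in `XXᴴ` and `XᴴX`, and `X` intertwines these two matrices, this
yields `√(XXᴴ) (SU) √(XᴴX) = X`. Hence `M(A,B) M(B⁺,A⁺) = SVTU = PQ` is self-adjoint, and the
means commute.
-/

open scoped MatrixOrder
open Matrix Polynomial

lemma SemiconjBy.aeval {R A : Type*} [CommSemiring R] [Semiring A] [Algebra R A] {x a b : A}
    (h : SemiconjBy x a b) (p : R[X]) : SemiconjBy x (aeval a p) (aeval b p) := by
  induction p using Polynomial.induction_on' with
  | add p q hp hq => simpa only [map_add] using hp.add_right hq
  | monomial k c =>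
    simpa only [aeval_monomial] using
      SemiconjBy.mul_right (Algebra.commutes c x).symm (h.pow_right k)

lemma IsStarProjection.conjTranspose_eq {n : Type*} [Fintype n] {P : Matrix n n ℂ}
    (hP : IsStarProjection P) : Pᴴ = P :=
  hP.isSelfAdjoint

section

variable {n : Type*} [Fintype n] [DecidableEq n]

lemma psqrt_eq_cfcSqrt {X : Matrix n n ℂ} (hX : X.PosSemidef) : psqrt X = CFC.sqrt X := by
  rw [CFC.sqrt_eq_real_sqrt X hX.nonneg, cfcₙ_eq_cfc, hX.1.cfc_eq, psqrt, dif_pos hX]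
  rfl

lemma posSemidef_psqrt (X : Matrix n n ℂ) : (psqrt X).PosSemidef := by
  by_cases hX : X.PosSemidef
  · rw [psqrt_eq_cfcSqrt hX]
    exact (CFC.sqrt_nonneg X).posSemidef
  · rw [psqrt, dif_neg hX]
    exact .zero

lemma psqrt_mul_psqrt {X : Matrix n n ℂ} (hX : X.PosSemidef) : psqrt X * psqrt X = X := by
  rw [psqrt_eq_cfcSqrt hX, CFC.sqrt_mul_sqrt_self X hX.nonneg]

lemma psqrt_mul_of_commute {X Y : Matrix n n ℂ} (hX : X.PosSemidef) (hY : Y.PosSemidef)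
    (h : Commute X Y) : psqrt X * psqrt Y = psqrt (X * Y) := by
  have hXY : Commute (psqrt X) (psqrt Y) := by
    rw [psqrt_eq_cfcSqrt hX, psqrt_eq_cfcSqrt hY, CFC.sqrt_eq_cfc, CFC.sqrt_eq_cfc]
    exact ((h.cfc_nnreal _).symm.cfc_nnreal _).symm
  have hprod : (X * Y).PosSemidef := (h.mul_nonneg hX.nonneg hY.nonneg).posSemidef
  rw [psqrt_eq_cfcSqrt hprod, eq_comm, CFC.sqrt_eq_iff _ _ hprod.nonneg
    (hXY.mul_nonneg (posSemidef_psqrt X).nonneg (posSemidef_psqrt Y).nonneg),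
    ← hXY.mul_mul_mul_comm, psqrt_mul_psqrt hX, psqrt_mul_psqrt hY]

lemma psqrt_eq_self_of_isStarProjection {P : Matrix n n ℂ} (hP : IsStarProjection P) :
    psqrt P = P := by
  rw [psqrt_eq_cfcSqrt hP.nonneg.posSemidef, CFC.sqrt_eq_iff _ _ hP.nonneg hP.nonneg,
    hP.isIdempotentElem.eq]

lemma exists_psqrt_eq_mul_aeval {M N : Matrix n n ℂ} (hM : M.PosSemidef) (hN : N.PosSemidef) :
    ∃ r : ℝ[X], psqrt M = M * aeval M r ∧ psqrt N = N * aeval N r := by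
  set s := (M.finite_real_spectrum.union N.finite_real_spectrum).toFinset
  -- `√x / x` is `0` at `x = 0`, so `x * r.eval x = √x` on the whole spectrum
  set r := Lagrange.interpolate s id (fun x => √x / x)
  have key : ∀ {Z : Matrix n n ℂ}, Z.PosSemidef → spectrum ℝ Z ⊆ s →
      psqrt Z = Z * aeval Z r := by
    intro Z hZ hs
    have hXr : Z * aeval Z r = aeval Z (X * r) := by rw [map_mul, aeval_X]
    rw [psqrt_eq_cfcSqrt hZ, CFC.sqrt_eq_real_sqrt Z hZ.nonneg, cfcₙ_eq_cfc, hXr,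
      ← cfc_polynomial _ Z hZ.1]
    refine cfc_congr fun x hx => ?_
    have hr : r.eval x = √x / x :=
      Lagrange.eval_interpolate_at_node (fun x => √x / x) (Set.injOn_id _) (hs hx)
    rcases eq_or_ne x 0 with rfl | hx0
    · simp
    · simp [hr, mul_div_cancel₀ _ hx0]
  exact ⟨r, key hM (by simp [s]), key hN (by simp [s])⟩

lemma toEuclideanLin_mul (M N : Matrix n n ℂ) :
    toEuclideanLin (M * N) = toEuclideanLin M ∘ₗ toEuclideanLin N := by
  simp [← coe_toEuclideanCLM_eq_toEuclideanLin]

lemma mker_mul (M N : Matrix n n ℂ) : mker (M * N) = (mker M).comap (toEuclideanLin N) := by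
  rw [mker, toEuclideanLin_mul, LinearMap.ker_comp, mker]

lemma mker_le_mker_mul (M N : Matrix n n ℂ) : mker N ≤ mker (M * N) := by
  rw [mker, mker, toEuclideanLin_mul]
  exact LinearMap.ker_le_ker_comp _ _

lemma mker_conjTranspose_mul_self (M : Matrix n n ℂ) : mker (Mᴴ * M) = mker M := by
  rw [mker, toEuclideanLin_mul, toEuclideanLin_conjTranspose_eq_adjoint,
    LinearMap.ker_adjoint_comp_self, mker]

lemma msupp_eq_orthogonal_mker (M : Matrix n n ℂ) : msupp M = (mker M)ᗮ := rfl

lemma msupp_eq_range_conjTranspose (M : Matrix n n ℂ) :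
    msupp M = LinearMap.range (toEuclideanLin Mᴴ) := by
  rw [msupp, LinearMap.orthogonal_ker, toEuclideanLin_conjTranspose_eq_adjoint]

lemma mul_eq_zero_of_mker_le {M N K : Matrix n n ℂ} (h : mker M ≤ mker N) (hK : M * K = 0) :
    N * K = 0 := by
  rw [← toEuclideanLin.map_eq_zero_iff, toEuclideanLin_mul, ← LinearMap.range_le_ker_iff]
    at hK ⊢
  exact hK.trans h

lemma mker_psqrt {X : Matrix n n ℂ} (hX : X.PosSemidef) : mker (psqrt X) = mker X := by
  have h := mker_conjTranspose_mul_self (psqrt X)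
  rw [(posSemidef_psqrt X).1.eq, psqrt_mul_psqrt hX] at h
  exact h.symm

lemma mker_conjTranspose_mul_mul (C : Matrix n n ℂ) {R : Matrix n n ℂ} (hR : R.PosSemidef) :
    mker (Cᴴ * R * C) = mker (R * C) := by
  have h : (psqrt R * C)ᴴ * (psqrt R * C) = Cᴴ * R * C := by
    rw [conjTranspose_mul, (posSemidef_psqrt R).1.eq, mul_assoc, ← mul_assoc (psqrt R),
      psqrt_mul_psqrt hR, ← mul_assoc]
  rw [← h, mker_conjTranspose_mul_self, mker_mul, mker_psqrt hR, ← mker_mul]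

lemma psqrt_mul_mul_psqrt_eq {X Y : Matrix n n ℂ} (h : X * Xᴴ * Y * (Xᴴ * X) = X * (Xᴴ * X)) :
    psqrt (X * Xᴴ) * Y * psqrt (Xᴴ * X) = X := by
  obtain ⟨r, hrM, hrN⟩ := exists_psqrt_eq_mul_aeval (posSemidef_self_mul_conjTranspose X)
    (posSemidef_conjTranspose_mul_self X)
  have hNN := psqrt_mul_psqrt (posSemidef_conjTranspose_mul_self X)
  set M := X * Xᴴ
  set N := Xᴴ * X
  have hMX : X * aeval N r = aeval M r * X :=
    (show SemiconjBy X N M by simp only [SemiconjBy, M, N, mul_assoc]).aeval r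
  have hMr : M * aeval M r = aeval M r * M := (Commute.refl M).aeval r
  -- `r(N) N r(N)` is the projection onto the support of `N`, on which `X` is injective
  have hN : N * (aeval N r * N * aeval N r - 1) = 0 := by
    rw [mul_sub, mul_one, sub_eq_zero]
    calc N * (aeval N r * N * aeval N r) = N * aeval N r * (N * aeval N r) := by
          simp only [mul_assoc]
      _ = N := by rw [← hrN, hNN]
  have hX : X * (aeval N r * N * aeval N r) = X := by
    have := mul_eq_zero_of_mker_le (mker_conjTranspose_mul_self X).le hN
    rwa [mul_sub, mul_one, sub_eq_zero] at this
  calc psqrt M * Y * psqrt N = aeval M r * (M * Y * N) * aeval N r := by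
        rw [hrM, hrN, hMr]; simp only [mul_assoc]
    _ = X * (aeval N r * N * aeval N r) := by rw [h, ← mul_assoc, ← hMX]; simp only [mul_assoc]
    _ = X := hX

namespace IsStarProjection

variable {P Q : Matrix n n ℂ}

lemma eq_of_range_toEuclideanLin_eq (hP : IsStarProjection P) (hQ : IsStarProjection Q)
    (h : LinearMap.range (toEuclideanLin P) = LinearMap.range (toEuclideanLin Q)) : P = Q :=
  EquivLike.injective toEuclideanCLM <| ContinuousLinearMap.IsStarProjection.ext
    (hP.map toEuclideanCLM) (hQ.map toEuclideanCLM) <| by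
      rwa [coe_toEuclideanCLM_eq_toEuclideanLin, coe_toEuclideanCLM_eq_toEuclideanLin]

lemma mker_mul_mul_self_le (hP : IsStarProjection P) (hQ : IsStarProjection Q) :
    mker (P * Q * (P * Q)) ≤ mker (P * Q) := by
  have hPP : ∀ X, P * (P * X) = P * X := fun X => by rw [← mul_assoc, hP.isIdempotentElem.eq]
  have hQQ : ∀ X, Q * (Q * X) = Q * X := fun X => by rw [← mul_assoc, hQ.isIdempotentElem.eq]
  have hQPQPQ : Q * (P * Q * (P * Q)) = (Q * P * Q)ᴴ * (Q * P * Q) := by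
    simp only [conjTranspose_mul, hP.conjTranspose_eq, hQ.conjTranspose_eq, mul_assoc, hQQ]
  have hQPQ : Q * P * Q = (P * Q)ᴴ * (P * Q) := by
    simp only [conjTranspose_mul, hP.conjTranspose_eq, hQ.conjTranspose_eq, mul_assoc, hPP]
  calc mker (P * Q * (P * Q)) ≤ mker (Q * (P * Q * (P * Q))) := mker_le_mker_mul _ _
    _ = mker (P * Q) := by
      rw [hQPQPQ, mker_conjTranspose_mul_self, hQPQ, mker_conjTranspose_mul_self]

lemma commute_of_mker_le (hP : IsStarProjection P) (hQ : IsStarProjection Q)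
    (h : mker (P * Q) ≤ mker (Q * P)) : Commute P Q := by
  have hQPQ : Q * P * (1 - Q) = 0 :=
    mul_eq_zero_of_mker_le ((mker_le_mker_mul P Q).trans h) hQ.mul_one_sub_self
  rw [mul_sub, mul_one, sub_eq_zero] at hQPQ
  calc P * Q = (Q * P)ᴴ := by rw [conjTranspose_mul, hP.conjTranspose_eq, hQ.conjTranspose_eq]
    _ = (Q * P * Q)ᴴ := by rw [← hQPQ]
    _ = Q * P := by
      rw [conjTranspose_mul, conjTranspose_mul, hP.conjTranspose_eq, hQ.conjTranspose_eq,
        ← mul_assoc, ← hQPQ]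

lemma commute_of_commute_of_mker_eq {G H : Matrix n n ℂ} (hP : IsStarProjection P)
    (hQ : IsStarProjection Q) (hG : G.IsHermitian) (hGH : Commute G H)
    (hGker : mker G = mker (Q * P)) (hHker : mker H = mker (P * Q)) : Commute P Q := by
  have hrange :
      LinearMap.range (toEuclideanLin G) = LinearMap.range (toEuclideanLin (P * Q)) := by
    have hQP : (Q * P)ᴴ = P * Q := by
      rw [conjTranspose_mul, hP.conjTranspose_eq, hQ.conjTranspose_eq]
    rw [← hG.eq, ← hQP, ← msupp_eq_range_conjTranspose, ← msupp_eq_range_conjTranspose,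
      msupp_eq_orthogonal_mker, msupp_eq_orthogonal_mker, hGker]
  refine hP.commute_of_mker_le hQ fun x hx => ?_
  have hGx : toEuclideanLin G x ∈ mker (P * Q) := by
    rw [← hHker] at hx ⊢
    have : x ∈ mker (G * H) := mker_le_mker_mul G H hx
    rwa [hGH.eq, mker_mul] at this
  obtain ⟨y, hy⟩ : toEuclideanLin G x ∈ LinearMap.range (toEuclideanLin (P * Q)) :=
    hrange ▸ LinearMap.mem_range_self _ x
  have hy0 : y ∈ mker (P * Q) := by
    apply hP.mker_mul_mul_self_le hQ
    rw [mker_mul, Submodule.mem_comap, hy]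
    exact hGx
  rw [← hGker]
  show toEuclideanLin G x = 0
  rw [← hy]
  exact hy0

end IsStarProjection

namespace IsMPInv

variable {A Ap : Matrix n n ℂ}

lemma symm (h : IsMPInv A Ap) : IsMPInv Ap A :=
  ⟨h.2.1, h.1, h.2.2.2, h.2.2.1⟩

lemma conjTranspose (h : IsMPInv A Ap) : IsMPInv Aᴴ Apᴴ := by
  obtain ⟨h₁, h₂, h₃, h₄⟩ := h
  refine ⟨?_, ?_, ?_, ?_⟩
  · rw [← conjTranspose_mul, ← conjTranspose_mul, ← mul_assoc, h₁]
  · rw [← conjTranspose_mul, ← conjTranspose_mul, ← mul_assoc, h₂]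
  · rw [← conjTranspose_mul, conjTranspose_conjTranspose, h₄]
  · rw [← conjTranspose_mul, conjTranspose_conjTranspose, h₃]

lemma unique {X Y : Matrix n n ℂ} (hX : IsMPInv A X) (hY : IsMPInv A Y) : X = Y := by
  obtain ⟨hX₁, hX₂, hX₃, hX₄⟩ := hX
  obtain ⟨hY₁, hY₂, hY₃, hY₄⟩ := hY
  have hXY : X = X * A * Y := calc
    X = X * (A * X)ᴴ := by rw [hX₃, ← mul_assoc, hX₂]
    _ = X * (A * Y * (A * X))ᴴ := by rw [← mul_assoc, hY₁]
    _ = X * A * Y := by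
      rw [conjTranspose_mul, hX₃, hY₃, ← mul_assoc, ← mul_assoc X A X, hX₂, mul_assoc]
  have hYX : Y = X * A * Y := calc
    Y = (Y * A)ᴴ * Y := by rw [hY₄, hY₂]
    _ = (Y * A * (X * A))ᴴ * Y := by
      rw [show Y * A * (X * A) = Y * (A * X * A) by simp only [mul_assoc], hX₁]
    _ = X * A * Y := by rw [conjTranspose_mul, hX₄, hY₄, mul_assoc _ (Y * A), hY₂]
  rw [hXY, ← hYX]

lemma isHermitian (hA : A.IsHermitian) (h : IsMPInv A Ap) : Ap.IsHermitian :=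
  unique (hA.eq ▸ h.conjTranspose) h

lemma commute (hA : A.IsHermitian) (h : IsMPInv A Ap) : Commute A Ap := by
  rw [commute_iff_eq, ← h.2.2.1, conjTranspose_mul, (h.isHermitian hA).eq, hA.eq]

lemma posSemidef (hA : A.PosSemidef) (h : IsMPInv A Ap) : Ap.PosSemidef := by
  have := hA.conjTranspose_mul_mul_same Ap
  rwa [(h.isHermitian hA.1).eq, h.2.1] at this

lemma isStarProjection_mul (h : IsMPInv A Ap) : IsStarProjection (Ap * A) :=
  ⟨by rw [IsIdempotentElem, ← mul_assoc, h.2.1], h.2.2.2⟩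

lemma psqrt_mul_psqrt (hA : A.PosSemidef) (h : IsMPInv A Ap) :
    psqrt Ap * psqrt A = Ap * A := by
  rw [psqrt_mul_of_commute (h.posSemidef hA) hA (h.commute hA.1).symm]
  exact psqrt_eq_self_of_isStarProjection h.isStarProjection_mul

lemma mker_mul (h : IsMPInv A Ap) : mker (Ap * A) = mker A :=
  le_antisymm (by simpa only [← mul_assoc, h.1] using mker_le_mker_mul A (Ap * A))
    (mker_le_mker_mul Ap A)

lemma range_mul (h : IsMPInv A Ap) : LinearMap.range (toEuclideanLin (Ap * A)) = msupp A := by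
  rw [← h.2.2.2, ← msupp_eq_range_conjTranspose, msupp_eq_orthogonal_mker,
    msupp_eq_orthogonal_mker, h.mker_mul]

end IsMPInv

lemma posSemidef_geoMean (A Ap B : Matrix n n ℂ) : (geoMean A Ap B).PosSemidef := by
  have := (posSemidef_psqrt (psqrt Ap * B * psqrt Ap)).conjTranspose_mul_mul_same (psqrt A)
  rwa [(posSemidef_psqrt A).1.eq] at this

variable {A B Ap Bp : Matrix n n ℂ}

lemma mker_geoMean (hA : A.PosSemidef) (hB : B.PosSemidef) (hAp : IsMPInv A Ap)
    (hBp : IsMPInv B Bp) : mker (geoMean A Ap B) = mker (Bp * B * (Ap * A)) := by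
  set S := psqrt A
  set V := psqrt Ap
  set T := psqrt B
  have hTT : T * T = B := psqrt_mul_psqrt hB
  have hV : Vᴴ = V := (posSemidef_psqrt Ap).1.eq
  have hT : Tᴴ = T := (posSemidef_psqrt B).1.eq
  have hVBV : V * B * V = (T * V)ᴴ * (T * V) := by
    rw [conjTranspose_mul, hV, hT, ← hTT]
    simp only [mul_assoc]
  have hS := mker_conjTranspose_mul_mul S (posSemidef_psqrt (V * B * V))
  rw [(posSemidef_psqrt A).1.eq] at hS
  calc mker (geoMean A Ap B) = mker (psqrt (V * B * V) * S) := hS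
    _ = mker (T * V * S) := by
      rw [mker_mul, mker_psqrt (hVBV ▸ posSemidef_conjTranspose_mul_self _), hVBV,
        mker_conjTranspose_mul_self, ← mker_mul]
    _ = mker (Bp * B * (Ap * A)) := by
      rw [mul_assoc, hAp.psqrt_mul_psqrt hA, mker_mul, mker_psqrt hB, ← hBp.mker_mul,
        ← mker_mul]

lemma geoMean_mul_geoMean_of_commute (hA : A.PosSemidef) (hB : B.PosSemidef)
    (hAp : IsMPInv A Ap) (hBp : IsMPInv B Bp) (h : Commute (Ap * A) (Bp * B)) :
    geoMean A Ap B * geoMean Bp B Ap = Ap * A * (Bp * B) := by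
  set S := psqrt A
  set V := psqrt Ap
  set T := psqrt B
  set U := psqrt Bp
  have hSV : S * V = Ap * A := by
    rw [hAp.symm.psqrt_mul_psqrt (hAp.posSemidef hA), (hAp.commute hA.1).eq]
  have hTU : T * U = Bp * B := by
    rw [hBp.symm.psqrt_mul_psqrt (hBp.posSemidef hB), (hBp.commute hB.1).eq]
  have hVV : V * V = Ap := psqrt_mul_psqrt (hAp.posSemidef hA)
  have hTT : T * T = B := psqrt_mul_psqrt hB
  have hV : Vᴴ = V := (posSemidef_psqrt Ap).1.eq
  have hT : Tᴴ = T := (posSemidef_psqrt B).1.eq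
  have hXXh : V * T * (V * T)ᴴ = V * B * V := by
    rw [conjTranspose_mul, hV, hT, ← hTT]; simp only [mul_assoc]
  have hXhX : (V * T)ᴴ * (V * T) = T * Ap * T := by
    rw [conjTranspose_mul, hV, hT, ← hVV]; simp only [mul_assoc]
  have key : psqrt (V * B * V) * (S * U) * psqrt (T * Ap * T) = V * T := by
    rw [← hXXh, ← hXhX]
    apply psqrt_mul_mul_psqrt_eq
    rw [hXXh, hXhX]
    calc V * B * V * (S * U) * (T * Ap * T) = V * B * ((V * S) * (U * T)) * Ap * T := by
          simp only [mul_assoc]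
      _ = V * (B * Bp * B) * (Ap * A * Ap) * T := by
          rw [hAp.psqrt_mul_psqrt hA, hBp.psqrt_mul_psqrt hB, h.eq]; simp only [mul_assoc]
      _ = V * T * (T * Ap * T) := by
          rw [hBp.1, hAp.2.1, ← hTT, ← hVV]; simp only [mul_assoc]
  calc geoMean A Ap B * geoMean Bp B Ap
        = S * psqrt (V * B * V) * S * (U * psqrt (T * Ap * T) * U) := rfl
    _ = S * (psqrt (V * B * V) * (S * U) * psqrt (T * Ap * T)) * U := by simp only [mul_assoc]
    _ = Ap * A * (Bp * B) := by rw [key, ← hSV, ← hTU]; simp only [mul_assoc]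

theorem commute_geoMean_iff (hA : A.PosSemidef) (hB : B.PosSemidef) (hAp : IsMPInv A Ap)
    (hBp : IsMPInv B Bp) :
    Commute (geoMean Bp B Ap) (geoMean A Ap B) ↔ Commute (Ap * A) (Bp * B) := by
  have hP := hAp.isStarProjection_mul
  have hQ := hBp.isStarProjection_mul
  constructor
  · intro h
    refine hP.commute_of_commute_of_mker_eq hQ (posSemidef_geoMean A Ap B).1 h.symm
      (mker_geoMean hA hB hAp hBp) ?_
    rw [mker_geoMean (hBp.posSemidef hB) (hAp.posSemidef hA) hBp.symm hAp.symm,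
      (hAp.commute hA.1).eq, (hBp.commute hB.1).eq]
  · intro h
    have hGH := geoMean_mul_geoMean_of_commute hA hB hAp hBp h
    calc geoMean Bp B Ap * geoMean A Ap B = (geoMean A Ap B * geoMean Bp B Ap)ᴴ := by
          rw [conjTranspose_mul, (posSemidef_geoMean A Ap B).1.eq,
            (posSemidef_geoMean Bp B Ap).1.eq]
      _ = geoMean A Ap B * geoMean Bp B Ap := by
          rw [hGH, conjTranspose_mul, hP.conjTranspose_eq, hQ.conjTranspose_eq, h.eq]

end

/-- M(B⁺,A⁺) and M(A,B) commute iff the support projections of A and B commute. -/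
theorem geoMean_commute_iff_proj_commute
    {n : Type*} [Fintype n] [DecidableEq n]
    (A B Ap Bp PiA PiB : Matrix n n ℂ) (hA : A.PosSemidef) (hB : B.PosSemidef)
    (hAp : IsMPInv A Ap) (hBp : IsMPInv B Bp)
    (hAherm : PiA.IsHermitian) (hAidem : PiA * PiA = PiA)
    (hArange : LinearMap.range (Matrix.toEuclideanLin PiA) = msupp A)
    (hBherm : PiB.IsHermitian) (hBidem : PiB * PiB = PiB)
    (hBrange : LinearMap.range (Matrix.toEuclideanLin PiB) = msupp B) :
    geoMean Bp B Ap * geoMean A Ap B = geoMean A Ap B * geoMean Bp B Ap ↔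
      PiA * PiB = PiB * PiA := by
  obtain rfl : PiA = Ap * A := IsStarProjection.eq_of_range_toEuclideanLin_eq
    ⟨hAidem, hAherm⟩ hAp.isStarProjection_mul (hArange.trans hAp.range_mul.symm)
  obtain rfl : PiB = Bp * B := IsStarProjection.eq_of_range_toEuclideanLin_eq
    ⟨hBidem, hBherm⟩ hBp.isStarProjection_mul (hBrange.trans hBp.range_mul.symm)
  exact commute_geoMean_iff hA hB hAp hBp
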